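/- Let z ∈ ℂ with z ∉ (-∞,0] and z ≠ 1. Then c_0(z) = 1/(1−z) and, for every n ≥ 1, c_n(z) = (z/(1−z)) Σ_{k=0}^{n−1} ((−1)^{n−k}/(n−k)!) c_k(z). -/

import Mathlib

/-!
Near `0` the function `f x = 1/(1 - z e^{-x})` satisfies `f = 1 + z e^{-x} f`. Comparing Maclaurin
coefficients, the Leibniz rule turns the product into a Cauchy product with the coefficients
`(-1)^m / m!` of `e^{-x}`, and the term `k = n` of that product is moved to the left.
-/

open scoped BigOperators

/-- The `n`-th Maclaurin (Taylor at `0`) coefficient of `g`. -/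
noncomputable def taylorCoeff (g : ℂ → ℂ) (n : ℕ) : ℂ :=
  iteratedDeriv n g 0 / (n.factorial : ℂ)

/-- `c_n(z)`: the `n`-th Maclaurin coefficient of `x ↦ 1/(1 - z e^{-x})`. -/
noncomputable def cCoeff (z : ℂ) (n : ℕ) : ℂ :=
  taylorCoeff (fun x => 1 / (1 - z * Complex.exp (-x))) n

open Filter Topology

section

variable {f g : ℂ → ℂ}

theorem taylorCoeff_congr_of_eventuallyEq (h : f =ᶠ[𝓝 0] g) (n : ℕ) :
    taylorCoeff f n = taylorCoeff g n := by
  rw [taylorCoeff, taylorCoeff, h.iteratedDeriv_eq n]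

theorem taylorCoeff_const (c : ℂ) (n : ℕ) :
    taylorCoeff (fun _ => c) n = if n = 0 then c else 0 := by
  rw [taylorCoeff, iteratedDeriv_const]
  split_ifs with hn <;> simp [hn]

theorem taylorCoeff_add {n : ℕ} (hf : ContDiffAt ℂ n f 0) (hg : ContDiffAt ℂ n g 0) :
    taylorCoeff (f + g) n = taylorCoeff f n + taylorCoeff g n := by
  rw [taylorCoeff, iteratedDeriv_add hf hg, add_div, taylorCoeff, taylorCoeff]

theorem taylorCoeff_const_mul (c : ℂ) (n : ℕ) :
    taylorCoeff (fun x => c * f x) n = c * taylorCoeff f n := by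
  rw [taylorCoeff, iteratedDeriv_const_mul_field, mul_div_assoc, taylorCoeff]

theorem taylorCoeff_mul {n : ℕ} (hf : ContDiffAt ℂ n f 0) (hg : ContDiffAt ℂ n g 0) :
    taylorCoeff (f * g) n =
      ∑ i ∈ Finset.range (n + 1), taylorCoeff f i * taylorCoeff g (n - i) := by
  rw [taylorCoeff, iteratedDeriv_mul hf hg, Finset.sum_div]
  refine Finset.sum_congr rfl fun i hi => ?_
  have hin : i ≤ n := Nat.lt_succ_iff.mp (Finset.mem_range.mp hi)
  rw [taylorCoeff, taylorCoeff, Nat.cast_choose ℂ hin]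
  field_simp [Nat.factorial_ne_zero]

end

theorem taylorCoeff_exp_neg (n : ℕ) :
    taylorCoeff (fun x => Complex.exp (-x)) n = (-1) ^ n / (n.factorial : ℂ) := by
  rw [taylorCoeff, iteratedDeriv_comp_neg, iteratedDeriv_eq_iterate, Complex.iter_deriv_exp]
  simp

theorem one_sub_mul_cCoeff {z : ℂ} (hz1 : z ≠ 1) (n : ℕ) :
    (1 - z) * cCoeff z n = (if n = 0 then 1 else 0) +
      z * ∑ k ∈ Finset.range n, ((-1 : ℂ) ^ (n - k) / ((n - k).factorial : ℂ)) * cCoeff z k := by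
  set f : ℂ → ℂ := fun x => 1 / (1 - z * Complex.exp (-x))
  set e : ℂ → ℂ := fun y => Complex.exp (-y)
  have hden : ∀ᶠ x in 𝓝 (0 : ℂ), 1 - z * Complex.exp (-x) ≠ 0 := by
    refine ContinuousAt.eventually_ne (by fun_prop) ?_
    simpa [sub_eq_zero] using hz1.symm
  have hf : ContDiffAt ℂ n f 0 := by
    have h0 := hden.self_of_nhds
    unfold f
    fun_prop (disch := exact h0)
  have he : ContDiffAt ℂ n e 0 := by fun_prop
  have hfixed : f =ᶠ[𝓝 0] (fun _ => 1) + fun x => z * (f * e) x := by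
    filter_upwards [hden] with x hx
    simp only [f, e, Pi.add_apply, Pi.mul_apply]
    field_simp
    ring
  have hrec : cCoeff z n = (if n = 0 then 1 else 0) +
      z * ∑ k ∈ Finset.range (n + 1), (-1 : ℂ) ^ (n - k) / ((n - k).factorial : ℂ) * cCoeff z k := by
    rw [cCoeff, taylorCoeff_congr_of_eventuallyEq hfixed,
      taylorCoeff_add (g := fun x => z * (f * e) x) contDiffAt_const
        (contDiffAt_const.mul (hf.mul he)),
      taylorCoeff_const, taylorCoeff_const_mul, taylorCoeff_mul hf he]
    congr 2
    refine Finset.sum_congr rfl fun k _ => ?_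
    rw [taylorCoeff_exp_neg, mul_comm]
    rfl
  rw [Finset.sum_range_succ, Nat.sub_self, pow_zero, Nat.factorial_zero, Nat.cast_one,
    div_one, one_mul] at hrec
  linear_combination hrec

theorem stmt10_general (z : ℂ) (hz1 : z ≠ 1) :
    cCoeff z 0 = 1 / (1 - z) ∧
    ∀ n : ℕ, 1 ≤ n →
      cCoeff z n
        = z / (1 - z) *
            ∑ k ∈ Finset.range n, ((-1 : ℂ) ^ (n - k) / ((n - k).factorial : ℂ)) * cCoeff z k := by
  have h1z : (1 : ℂ) - z ≠ 0 := sub_ne_zero.mpr hz1.symm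
  refine ⟨?_, fun n hn => ?_⟩
  · rw [eq_div_iff h1z, mul_comm, one_sub_mul_cCoeff hz1]
    simp
  · rw [div_mul_eq_mul_div, eq_div_iff h1z, mul_comm, one_sub_mul_cCoeff hz1,
      if_neg (by omega), zero_add]

theorem stmt10 (z : ℂ) (hz : ∀ x : ℝ, x ≤ 0 → z ≠ (x : ℂ)) (hz1 : z ≠ 1) :
    cCoeff z 0 = 1 / (1 - z) ∧
    ∀ n : ℕ, 1 ≤ n →
      cCoeff z n
        = z / (1 - z) *
            ∑ k ∈ Finset.range n, ((-1 : ℂ) ^ (n - k) / ((n - k).factorial : ℂ)) * cCoeff z k :=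
  stmt10_general z hz1
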